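/- In the group P = ℕ → F₂ (unrestricted direct power of the free group of rank 2, with pointwise operations), an element ζ lies in the commutator subgroup [P,P] if and only if there exists m ∈ ℕ such that for every k ∈ ℕ, the component ζ(k) is a product of at most m commutators in F₂. -/

import Mathlib

open Subgroup
open scoped commutatorElement

lemma pad_prod {G : Type*} [Group G] {l d : ℕ} (f : Fin l → G) :
    (List.ofFn fun i : Fin (l + d) =>
      if h : (i : ℕ) < l then f ⟨i, h⟩ else 1).prod = (List.ofFn f).prod := by
  rw [List.ofFn_add, List.prod_append]
  have h2 : (List.ofFn fun i : Fin d =>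
      if h : ((Fin.natAdd l i : Fin (l + d)) : ℕ) < l
      then f ⟨(Fin.natAdd l i : Fin (l + d)), h⟩ else 1).prod = 1 := by
    apply List.prod_eq_one
    intro x hx
    rw [List.mem_ofFn] at hx
    obtain ⟨i, rfl⟩ := hx
    exact dif_neg (by simp)
  rw [h2, mul_one]
  congr 1
  refine congrArg List.ofFn ?_
  funext i
  simp

lemma pad_prod' {G : Type*} [Group G] {l m : ℕ} (h : l ≤ m) (f : Fin l → G) :
    (List.ofFn fun i : Fin m =>
      if h : (i : ℕ) < l then f ⟨i, h⟩ else 1).prod = (List.ofFn f).prod := by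
  obtain ⟨d, rfl⟩ := Nat.exists_eq_add_of_le h
  exact pad_prod f

/-- In the unrestricted direct power P = ℕ → F₂, an element lies in [P,P] iff
there is a uniform bound m such that every component is a product of at most m
commutators. -/
theorem stmt_8 (ζ : ℕ → FreeGroup (Fin 2)) :
    ζ ∈ commutator (ℕ → FreeGroup (Fin 2)) ↔
    ∃ m : ℕ, ∀ k : ℕ, ∃ l, l ≤ m ∧ ∃ u w : Fin l → FreeGroup (Fin 2),
      ζ k = (List.ofFn fun i => ⁅u i, w i⁆).prod := by
  constructor
  · intro hζ
    rw [commutator_eq_closure] at hζ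
    have hζ' : ζ ∈ Submonoid.closure (commutatorSet (ℕ → FreeGroup (Fin 2)) ∪ (commutatorSet (ℕ → FreeGroup (Fin 2)))⁻¹) := by
      rw [← Subgroup.closure_toSubmonoid]
      exact hζ
    obtain ⟨L, hL, hprod⟩ := Submonoid.exists_list_of_mem_closure hζ'
    have key : ∀ y ∈ L, ∃ a b : ℕ → FreeGroup (Fin 2), y = ⁅a, b⁆ := by
      intro y hy
      rcases hL y hy with h | h
      · obtain ⟨a, b, hab⟩ := h
        exact ⟨a, b, hab.symm⟩
      · obtain ⟨a, b, hab⟩ := Set.mem_inv.mp h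
        exact ⟨b, a, by rw [← commutatorElement_inv, hab, inv_inv]⟩
    choose A B hAB using fun i : Fin L.length => key (L.get i) (L.get_mem i)
    refine ⟨L.length, fun k => ⟨L.length, le_rfl,
      fun i => A i k, fun i => B i k, ?_⟩⟩
    have hk : ζ k = (L.map (fun g => g k)).prod := by
      rw [← hprod]
      exact map_list_prod (Pi.evalMonoidHom (fun _ => FreeGroup (Fin 2)) k) L
    rw [hk]
    conv_lhs => rw [← List.ofFn_get L]
    rw [List.map_ofFn]
    congr 1
    refine congrArg List.ofFn ?_
    funext i
    simp only [Function.comp]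
    rw [hAB i]
    rfl
  · intro ⟨m, hm⟩
    choose l hl u w huw using hm
    set U : Fin m → (ℕ → FreeGroup (Fin 2)) := fun i k =>
      if h : (i : ℕ) < l k then u k ⟨i, h⟩ else 1 with hU
    set W : Fin m → (ℕ → FreeGroup (Fin 2)) := fun i k =>
      if h : (i : ℕ) < l k then w k ⟨i, h⟩ else 1 with hW
    have hζ : ζ = (List.ofFn fun i => ⁅U i, W i⁆).prod := by
      funext k
      rw [huw k]
      symm
      calc ((List.ofFn fun i => ⁅U i, W i⁆).prod) k
          = (List.map (⇑(Pi.evalMonoidHom (fun _ => FreeGroup (Fin 2)) k))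
              (List.ofFn fun i => ⁅U i, W i⁆)).prod :=
            map_list_prod (Pi.evalMonoidHom (fun _ => FreeGroup (Fin 2)) k) _
        _ = (List.ofFn fun i : Fin m =>
              if h : (i : ℕ) < l k then ⁅u k ⟨i, h⟩, w k ⟨i, h⟩⁆ else 1).prod := by
            rw [List.map_ofFn]
            congr 1
            refine congrArg List.ofFn ?_
            funext i
            by_cases h : (i : ℕ) < l k
            · simp [hU, hW, h, commutatorElement_def, Pi.evalMonoidHom]
            · simp [hU, hW, h, commutatorElement_def, Pi.evalMonoidHom]
        _ = (List.ofFn fun i : Fin (l k) => ⁅u k i, w k i⁆).prod :=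
            by exact pad_prod' (hl k) fun i => ⁅u k i, w k i⁆
    rw [hζ]
    apply Subgroup.list_prod_mem
    intro x hx
    rw [List.mem_ofFn] at hx
    obtain ⟨i, rfl⟩ := hx
    exact commutator_mem_commutator (mem_top _) (mem_top _)
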